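/- arXiv:2209.03477 — 7 statements merged into one kernel-verified Lean document; each statement's English description precedes it below -/
import Mathlib

section
/- If two direct sums of chains ⊕_{i∈I} C_i and ⊕_{j∈J} C'_j are equimorphic (mutually embeddable), then |I| = |J|. -/
open Cardinal

/-- Two preorders are equimorphic (siblings) if each order-embeds into the other. -/
def Equimorphic (α : Type*) (β : Type*) [Preorder α] [Preorder β] : Prop :=
  Nonempty (α ↪o β) ∧ Nonempty (β ↪o α)

/-- The setoid identifying order-isomorphic equimorphic substructures. -/
def sibSetoid (α : Type*) [Preorder α] : Setoid {S : Set α // Equimorphic S α} :=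
  ⟨fun S T => Nonempty ((S : Set α) ≃o (T : Set α)),
    ⟨fun _ => ⟨OrderIso.refl _⟩, fun ⟨e⟩ => ⟨e.symm⟩, fun ⟨e⟩ ⟨f⟩ => ⟨e.trans f⟩⟩⟩

/-- The sibling number of a structure: the number of isomorphism classes of
substructures equimorphic to it (every sibling is isomorphic to such a substructure). -/
noncomputable def sibNumber (α : Type*) [Preorder α] : Cardinal :=
  #(Quotient (sibSetoid α))

/-- In a disjoint sum of linear orders, elements with the same index are comparable. -/
lemma dsc_fiber_comp {J : Type} {C' : J → Type} [∀ j, LinearOrder (C' j)]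
    (u v : Σ j, C' j) (h : u.1 = v.1) : u ≤ v ∨ v ≤ u := by
  obtain ⟨j, a⟩ := u
  obtain ⟨j', b⟩ := v
  dsimp at h
  subst h
  simpa [Sigma.mk_le_mk_iff] using le_total a b

/-- An order embedding of disjoint sums of chains induces an injection of index sets. -/
lemma dsc_emb_card_le {I J : Type} {C : I → Type} {C' : J → Type}
    [∀ i, LinearOrder (C i)] [∀ j, LinearOrder (C' j)]
    [∀ i, Nonempty (C i)]
    (f : (Σ i, C i) ↪o (Σ j, C' j)) : #I ≤ #J := by
  refine ⟨⟨fun i => (f ⟨i, Classical.arbitrary _⟩).1, ?_⟩⟩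
  intro i i' hfst
  set x : Σ i, C i := ⟨i, Classical.arbitrary _⟩ with hx
  set y : Σ i, C i := ⟨i', Classical.arbitrary _⟩ with hy
  have hcomp : f x ≤ f y ∨ f y ≤ f x := dsc_fiber_comp _ _ hfst
  have hxy : x ≤ y ∨ y ≤ x := by
    rcases hcomp with h | h
    · exact Or.inl (f.le_iff_le.mp h)
    · exact Or.inr (f.le_iff_le.mp h)
  rcases hxy with h | h
  · exact (Sigma.le_def.mp h).1
  · exact ((Sigma.le_def.mp h).1).symm

theorem equimorphic_dsc_same_index_card (I J : Type) (C : I → Type) (C' : J → Type)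
    [∀ i, LinearOrder (C i)] [∀ j, LinearOrder (C' j)]
    [∀ i, Nonempty (C i)] [∀ j, Nonempty (C' j)]
    (h : Equimorphic (Σ i, C i) (Σ j, C' j)) :
    #I = #J := by
  obtain ⟨⟨f⟩, ⟨g⟩⟩ := h
  exact le_antisymm (dsc_emb_card_le f) (dsc_emb_card_le g)
end

section
/- Let D be a direct sum of chains with only finitely many non-trivial (i.e., size > 1) components. If every component of D has exactly one sibling up to isomorphism, then D has exactly one sibling up to isomorphism. -/
/-!
An embedding of `Σ i, C i` into a subset `S` maps each chain `C i` into a single fibre `T (σ i)`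
of `S`, with `σ` injective. Since `σ` maps the finite set `N` of nontrivial indices into itself,
it permutes `N`; following the cycle of `i ∈ N` embeds `C i` into its own fibre `T i`, so
`T i ≅ C i` because `C i` has a single sibling. All other fibres are singletons or empty, and
Schröder–Bernstein, applied to `σ` and the inclusion, matches the trivial indices with those of the
nonempty trivial fibres.
-/

open Cardinal

open Function Set

theorem equimorphic_univ (α : Type*) [Preorder α] : Equimorphic (univ : Set α) α :=
  ⟨⟨OrderIso.Set.univ.toOrderEmbedding⟩, ⟨OrderIso.Set.univ.symm.toOrderEmbedding⟩⟩

theorem sibNumber_eq_one_iff {α : Type*} [Preorder α] :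
    sibNumber α = 1 ↔ ∀ S : Set α, Equimorphic S α → Nonempty (S ≃o α) := by
  let univClass := Quotient.mk (sibSetoid α) ⟨univ, equimorphic_univ α⟩
  rw [sibNumber, Cardinal.eq_one_iff_unique]
  refine ⟨fun ⟨hsub, _⟩ S hS => ?_, fun h => ⟨⟨fun a b => ?_⟩, ⟨univClass⟩⟩⟩
  · obtain ⟨e⟩ := Quotient.exact (hsub.elim (Quotient.mk _ ⟨S, hS⟩) univClass)
    exact ⟨e.trans OrderIso.Set.univ⟩
  · induction a, b using Quotient.inductionOn₂ with
    | h a b =>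
      obtain ⟨ea⟩ := h a.1 a.2
      obtain ⟨eb⟩ := h b.1 b.2
      exact Quotient.sound ⟨ea.trans eb.symm⟩

theorem Set.Finite.mem_periodicPts {ι : Type*} {N : Set ι} (hN : N.Finite) {σ : ι → ι}
    (hσ : InjOn σ N) (hmaps : MapsTo σ N N) {i : ι} (hi : i ∈ N) : i ∈ periodicPts σ := by
  have := hN.to_subtype
  obtain ⟨n, hn, hper⟩ :=
    Function.mem_periodicPts.mp ((hmaps.restrict_inj.mpr hσ).mem_periodicPts ⟨i, hi⟩)
  exact mk_mem_periodicPts hn (hper.map (g := Subtype.val) fun _ => rfl)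

theorem Function.Injective.mem_of_apply_mem {ι : Type*} {σ : ι → ι} (hσ : Injective σ) {N : Set ι}
    (hmaps : MapsTo σ N N) {i : ι} (hi : σ i ∈ N) (hper : σ i ∈ periodicPts σ) : i ∈ N := by
  obtain ⟨n, hn, hfix⟩ := Function.mem_periodicPts.mp hper
  obtain ⟨m, rfl⟩ := Nat.exists_eq_succ_of_ne_zero hn.ne'
  have : σ^[m] (σ i) = i := hσ (by rwa [← iterate_succ_apply' σ m])
  exact this ▸ hmaps.iterate m hi

theorem Set.exists_equiv_of_mapsTo_compl {ι : Type*} {N A : Set ι} (hNA : N ⊆ A) {σ : ι → ι}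
    (hσ : InjOn σ Nᶜ) (hmaps : MapsTo σ Nᶜ (A \ N)) :
    ∃ e : ι ≃ A, (∀ i ∈ N, (e i : ι) = i) ∧ ∀ i ∉ N, (e i : ι) ∉ N := by
  classical
  obtain ⟨e⟩ := Embedding.antisymm ⟨_, hmaps.restrict_inj.mpr hσ⟩
    (embeddingOfSubset (A \ N) Nᶜ fun _ h => h.2)
  refine ⟨(Equiv.Set.sumCompl N).symm.trans
    ((Equiv.sumCongr (Equiv.refl N) e).trans (Equiv.Set.sumDiffSubset hNA)), fun i hi => ?_,
    fun i hi => ?_⟩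
  · simp [Equiv.Set.sumCompl_symm_apply_of_mem hi]
  · simpa [Equiv.Set.sumCompl_symm_apply_of_notMem hi] using (e ⟨i, hi⟩).2.2

namespace Sigma

variable {ι κ : Type*} {C : ι → Type*} {D : κ → Type*}

theorem fst_eq_of_le [∀ i, LE (C i)] {a b : Σ i, C i} (h : a ≤ b) : a.1 = b.1 :=
  (le_def.mp h).1

theorem le_total_of_fst_eq [∀ i, LinearOrder (C i)] {a b : Σ i, C i} (h : a.1 = b.1) :
    a ≤ b ∨ b ≤ a := by
  obtain ⟨i, x⟩ := a
  obtain ⟨j, y⟩ := b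
  cases h
  simpa only [mk_le_mk_iff] using le_total x y

theorem exists_eq_mk_of_fst_eq {j : ι} (p : Σ i, C i) (h : p.1 = j) : ∃ y : C j, p = ⟨j, y⟩ := by
  obtain ⟨i, x⟩ := p
  cases h
  exact ⟨x, rfl⟩

end Sigma

section

variable {ι κ : Type*} {C : ι → Type*} {D : κ → Type*}

def OrderIso.sigmaFibers [∀ i, LE (C i)] (S : Set (Σ i, C i)) :
    S ≃o Σ i, {x : C i | ⟨i, x⟩ ∈ S} where
  toFun p := ⟨p.1.1, p.1.2, p.2⟩
  invFun q := ⟨⟨q.1, q.2.1⟩, q.2.2⟩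
  left_inv _ := rfl
  right_inv _ := rfl
  map_rel_iff' := by
    rintro ⟨⟨i, x⟩, hx⟩ ⟨⟨j, y⟩, hy⟩
    by_cases hij : i = j
    · subst hij
      simp
    · exact iff_of_false (fun h => hij (Sigma.fst_eq_of_le h))
        fun h => hij (Sigma.fst_eq_of_le (Subtype.coe_le_coe.mpr h))

def OrderEmbedding.sigmaMap [∀ i, PartialOrder (C i)] [∀ j, Preorder (D j)] (β : ι ↪ κ)
    (f : ∀ i, C i ↪o D (β i)) : (Σ i, C i) ↪o Σ j, D j :=
  OrderEmbedding.ofMapLEIff (fun p : Σ i, C i => (⟨β p.1, f p.1 p.2⟩ : Σ j, D j)) <| by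
    rintro ⟨i, x⟩ ⟨j, y⟩
    by_cases hij : i = j
    · subst hij
      simp
    · exact iff_of_false (fun h => hij (β.injective (Sigma.fst_eq_of_le h)))
        fun h => hij (Sigma.fst_eq_of_le h)

theorem OrderEmbedding.exists_injective_sigma [∀ i, LinearOrder (C i)] [∀ j, LinearOrder (D j)]
    [∀ i, Nonempty (C i)] (F : (Σ i, C i) ↪o Σ j, D j) :
    ∃ σ : ι → κ, Injective σ ∧ ∀ i, Nonempty (C i ↪o D (σ i)) := by
  let σ i := (F ⟨i, Classical.arbitrary (C i)⟩).1
  have hσ i (x : C i) : (F ⟨i, x⟩).1 = σ i := by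
    rcases le_total x (Classical.arbitrary (C i)) with h | h
    · exact Sigma.fst_eq_of_le (F.monotone (Sigma.mk_le_mk_iff.2 h))
    · exact (Sigma.fst_eq_of_le (F.monotone (Sigma.mk_le_mk_iff.2 h))).symm
  choose g hg using fun i x => Sigma.exists_eq_mk_of_fst_eq _ (hσ i x)
  refine ⟨σ, fun i j hij => ?_, fun i => ⟨OrderEmbedding.ofMapLEIff (g i) fun x y => ?_⟩⟩
  · rcases Sigma.le_total_of_fst_eq hij with h | h
    · exact Sigma.fst_eq_of_le (F.le_iff_le.mp h)
    · exact (Sigma.fst_eq_of_le (F.le_iff_le.mp h)).symm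
  · rw [← Sigma.mk_le_mk_iff (i := σ i), ← hg, ← hg, F.le_iff_le, Sigma.mk_le_mk_iff]

theorem Sigma.nonempty_orderIso_of_injective [∀ i, PartialOrder (C i)] [∀ j, Preorder (D j)]
    {β : ι → κ} (hβ : Injective β) (hrange : ∀ j, Nonempty (D j) → j ∈ range β)
    (e : ∀ i, Nonempty (C i ≃o D (β i))) : Nonempty ((Σ i, C i) ≃o Σ j, D j) := by
  refine ⟨OrderIso.ofSurjective
    (OrderEmbedding.sigmaMap ⟨β, hβ⟩ fun i => (e i).some.toOrderEmbedding) ?_⟩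
  rintro ⟨j, y⟩
  obtain ⟨i, rfl⟩ := hrange j ⟨y⟩
  exact ⟨⟨i, (e i).some.symm y⟩, by simp [OrderEmbedding.sigmaMap]⟩

end

theorem nonempty_orderEmbedding_iterate {ι : Type*} {C : ι → Type*} [∀ i, Preorder (C i)]
    {σ : ι → ι} (h : ∀ i, Nonempty (C i ↪o C (σ i))) (n : ℕ) (i : ι) :
    Nonempty (C i ↪o C (σ^[n] i)) := by
  induction n generalizing i with
  | zero => exact ⟨RelEmbedding.refl _⟩
  | succ n ih =>
    obtain ⟨e⟩ := h i
    obtain ⟨e'⟩ := ih (σ i)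
    exact ⟨e.trans e'⟩

section

variable {ι : Type*} {C : ι → Type*} (T : ∀ i, Set (C i)) {σ : ι → ι}

theorem mapsTo_setOf_nontrivial [∀ i, Preorder (C i)] (hemb : ∀ i, Nonempty (C i ↪o T (σ i))) :
    MapsTo σ {i | Nontrivial (C i)} {i | Nontrivial (C i)} := fun i (_ : Nontrivial (C i)) =>
  let ⟨e⟩ := hemb i
  (e.trans (OrderEmbedding.subtype _)).injective.nontrivial

theorem nonempty_orderEmbedding_of_mem_periodicPts [∀ i, Preorder (C i)]
    (hemb : ∀ i, Nonempty (C i ↪o T (σ i))) {i : ι} (hi : i ∈ periodicPts σ) :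
    Nonempty (C i ↪o T i) := by
  obtain ⟨n, hn, hfix⟩ := mem_periodicPts.mp hi
  obtain ⟨m, rfl⟩ := Nat.exists_eq_succ_of_ne_zero hn.ne'
  obtain ⟨e⟩ := nonempty_orderEmbedding_iterate
    (fun j => (hemb j).map (·.trans (OrderEmbedding.subtype _))) m i
  obtain ⟨e'⟩ := hemb (σ^[m] i)
  rw [← iterate_succ_apply' σ m, hfix.eq] at e'
  exact ⟨e.trans e'⟩

theorem nonempty_sigma_orderIso_of_embedding [∀ i, PartialOrder (C i)] [∀ i, Nonempty (C i)]
    (hfin : {i | Nontrivial (C i)}.Finite) (hone : ∀ i, sibNumber (C i) = 1)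
    (hσ : Injective σ) (hemb : ∀ i, Nonempty (C i ↪o T (σ i))) :
    Nonempty ((Σ i, C i) ≃o Σ i, T i) := by
  set N := {i | Nontrivial (C i)}
  have hmaps : MapsTo σ N N := mapsTo_setOf_nontrivial T hemb
  have hper : ∀ i ∈ N, i ∈ periodicPts σ := fun i => hfin.mem_periodicPts hσ.injOn hmaps
  have hiso : ∀ i ∈ N, Nonempty (C i ≃o T i) := fun i hi =>
    (sibNumber_eq_one_iff.mp (hone i) (T i) ⟨⟨OrderEmbedding.subtype _⟩,
      nonempty_orderEmbedding_of_mem_periodicPts T hemb (hper i hi)⟩).map OrderIso.symm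
  have hcompl : MapsTo σ Nᶜ ({j | Nonempty (T j)} \ N) := fun i hi =>
    ⟨(hemb i).map fun e => e (Classical.arbitrary _),
      fun hσi => hi (hσ.mem_of_apply_mem hmaps hσi (hper _ hσi))⟩
  obtain ⟨e, he_mem, he_notMem⟩ := exists_equiv_of_mapsTo_compl
    (fun i hi => (hiso i hi).map fun e => e (Classical.arbitrary _)) hσ.injOn hcompl
  refine Sigma.nonempty_orderIso_of_injective (β := fun i => (e i : ι))
    (Subtype.val_injective.comp e.injective) (fun j hj => ⟨e.symm ⟨j, hj⟩, by simp⟩) fun i => ?_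
  by_cases hi : i ∈ N
  · rw [he_mem i hi]
    exact hiso i hi
  · have : Subsingleton (C i) := not_nontrivial_iff_subsingleton.mp hi
    have : Subsingleton (C (e i)) := not_nontrivial_iff_subsingleton.mp (he_notMem i hi)
    have : Nonempty (T (e i)) := (e i).2
    let := uniqueOfSubsingleton (Classical.arbitrary (C i))
    let := uniqueOfSubsingleton (Classical.arbitrary (T (e i)))
    exact ⟨OrderIso.ofUnique _ _⟩

end

theorem sib_one_of_finitely_many_nontrivial (I : Type) (C : I → Type)
    [∀ i, LinearOrder (C i)] [∀ i, Nonempty (C i)]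
    (hfin : {i | Nontrivial (C i)}.Finite)
    (hone : ∀ i, sibNumber (C i) = 1) :
    sibNumber (Σ i, C i) = 1 := by
  rw [sibNumber_eq_one_iff]
  rintro S ⟨-, ⟨f⟩⟩
  obtain ⟨σ, hσ, hemb⟩ :=
    OrderEmbedding.exists_injective_sigma (f.trans (OrderIso.sigmaFibers S).toOrderEmbedding)
  obtain ⟨e⟩ := nonempty_sigma_orderIso_of_embedding (fun j => {x | ⟨j, x⟩ ∈ S}) hfin hone hσ hemb
  exact ⟨(OrderIso.sigmaFibers S).trans e.symm⟩
end

section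
/- For a direct sum of chains D = ⊕_{i∈I} C_i, the sibling number of D is at least the supremum of the sibling numbers of its components: Sib(D) ≥ max{Sib(C_i) : i ∈ I}. In particular, if some component has infinitely many siblings up to isomorphism, so does D. -/
open Cardinal

/-!
Send a sibling `S` of the component `C i` to the subset of `Σ j, C j` that is a copy of `S`
inside every component equimorphic to `C i` and the whole component elsewhere; this is a
sibling of the sum. It determines `S` up to isomorphism: two points of a sum of chains are
comparable iff they lie in the same component, so an isomorphism of such sums maps components
onto components. The component carrying `S` is therefore isomorphic to some component of the
subset built from `S'`, which is either a copy of `S'` or a component not equimorphic to `C i`;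
the latter is impossible because `S` is equimorphic to `C i`.
-/

universe u

namespace Sigma

variable {ι : Type*} {α β : ι → Type*}

theorem fst_eq_of_le_s4 [∀ i, LE (α i)] {x y : Σ i, α i} (h : x ≤ y) : x.1 = y.1 :=
  (le_def.1 h).1

theorem le_or_ge_iff_fst_eq [∀ i, LinearOrder (α i)] {x y : Σ i, α i} :
    x ≤ y ∨ y ≤ x ↔ x.1 = y.1 := by
  refine ⟨fun h => h.elim fst_eq_of_le_s4 fun h => (fst_eq_of_le_s4 h).symm, ?_⟩
  obtain ⟨i, a⟩ := x
  obtain ⟨j, b⟩ := y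
  rintro (rfl : i = j)
  simpa only [mk_le_mk_iff] using le_total a b

def mkOrderEmbedding [∀ i, Preorder (α i)] (i : ι) : α i ↪o Σ i, α i where
  toFun := Sigma.mk i
  inj' := sigma_mk_injective
  map_rel_iff' := mk_le_mk_iff

end Sigma

namespace OrderEmbedding

variable {ι : Type*} {α β : ι → Type*} [∀ i, Preorder (α i)] [∀ i, Preorder (β i)]

def sigmaCongrRight (f : ∀ i, α i ↪o β i) : (Σ i, α i) ↪o Σ i, β i where
  toEmbedding := .sigmaMap (.refl ι) fun i => (f i).toEmbedding
  map_rel_iff' := by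
    rintro ⟨i, a⟩ ⟨j, b⟩
    by_cases hij : i = j
    · subst hij
      exact Sigma.mk_le_mk_iff.trans ((f i).le_iff_le.trans Sigma.mk_le_mk_iff.symm)
    · exact iff_of_false (hij ∘ Sigma.fst_eq_of_le_s4) (hij ∘ Sigma.fst_eq_of_le_s4)

end OrderEmbedding

namespace OrderIso

section Preorder

variable {ι : Type*} {α β : ι → Type*} [∀ i, Preorder (α i)] [∀ i, Preorder (β i)]

def sigmaCongrRight (f : ∀ i, α i ≃o β i) : (Σ i, α i) ≃o Σ i, β i where
  toEquiv := .sigmaCongrRight fun i => (f i).toEquiv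
  map_rel_iff' := (OrderEmbedding.sigmaCongrRight fun i => (f i).toOrderEmbedding).map_rel_iff

def univSigma (A : ∀ i, Set (α i)) : Set.sigma .univ A ≃o Σ i, A i where
  toFun x := ⟨x.1.1, x.1.2, x.2.2⟩
  invFun x := ⟨⟨x.1, x.2.1⟩, ⟨trivial, x.2.2⟩⟩
  left_inv _ := rfl
  right_inv _ := rfl
  map_rel_iff' := by
    rintro ⟨⟨i, a⟩, ha⟩ ⟨⟨j, b⟩, hb⟩
    by_cases hij : i = j
    · subst hij
      simp
    · exact iff_of_false (hij ∘ Sigma.fst_eq_of_le_s4) (hij ∘ Sigma.fst_eq_of_le_s4)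

end Preorder

section LinearOrder

variable {ι : Type*} {α β : ι → Type*} [∀ i, LinearOrder (α i)] [∀ i, LinearOrder (β i)]

theorem sigma_fst_eq_iff (e : (Σ i, α i) ≃o Σ i, β i) {x y : Σ i, α i} :
    (e x).1 = (e y).1 ↔ x.1 = y.1 := by
  rw [← Sigma.le_or_ge_iff_fst_eq, ← Sigma.le_or_ge_iff_fst_eq, e.le_iff_le, e.le_iff_le]

theorem nonempty_orderIso_sigma_fiber (e : (Σ i, α i) ≃o Σ i, β i) (i : ι) (a : α i) :
    Nonempty (α i ≃o β (e ⟨i, a⟩).1) := by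
  set k := (e ⟨i, a⟩).1
  have hrange : Set.range ((Sigma.mkOrderEmbedding i).trans e.toOrderEmbedding) =
      Set.range (Sigma.mkOrderEmbedding k) := by
    change Set.range (e ∘ Sigma.mk i) = Set.range (Sigma.mk k)
    ext y
    rw [Set.range_comp, Set.range_sigmaMk, Set.range_sigmaMk, e.image_eq_preimage_symm]
    simp only [Set.mem_preimage, Set.mem_singleton_iff]
    change (e.symm y).1 = (⟨i, a⟩ : Σ i, α i).1 ↔ _
    rw [← e.sigma_fst_eq_iff, e.apply_symm_apply]
  exact ⟨OrderEmbedding.orderIso.trans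
    ((OrderIso.setCongr _ _ hrange).trans OrderEmbedding.orderIso.symm)⟩

end LinearOrder

end OrderIso

namespace Equimorphic

section Basic

variable {α β γ : Type*} [Preorder α] [Preorder β] [Preorder γ]

theorem of_orderIso (e : α ≃o β) : Equimorphic α β :=
  ⟨⟨e.toOrderEmbedding⟩, ⟨e.symm.toOrderEmbedding⟩⟩

theorem refl (α : Type*) [Preorder α] : Equimorphic α α :=
  of_orderIso (OrderIso.refl α)

theorem symm (h : Equimorphic α β) : Equimorphic β α :=
  And.symm h

theorem trans (h₁ : Equimorphic α β) (h₂ : Equimorphic β γ) : Equimorphic α γ :=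
  ⟨⟨h₁.1.some.trans h₂.1.some⟩, ⟨h₂.2.some.trans h₁.2.some⟩⟩

end Basic

section Sigma

variable {ι : Type*} {α β : ι → Type*} [∀ i, Preorder (α i)] [∀ i, Preorder (β i)]

theorem sigma (h : ∀ i, Equimorphic (α i) (β i)) : Equimorphic (Σ i, α i) (Σ i, β i) :=
  ⟨⟨.sigmaCongrRight fun i => (h i).1.some⟩, ⟨.sigmaCongrRight fun i => (h i).2.some⟩⟩

end Sigma

end Equimorphic

section Spread

variable {I : Type u} {C : I → Type u} [∀ i, LinearOrder (C i)] {i : I}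

open Classical in
noncomputable def spreadSet (S : Set (C i)) (j : I) : Set (C j) :=
  if h : Equimorphic (C j) (C i) then h.2.some '' S else Set.univ

noncomputable def spreadSetIsoOfEquimorphic (S : Set (C i)) {j : I}
    (h : Equimorphic (C j) (C i)) : spreadSet S j ≃o S :=
  (OrderIso.setCongr _ _ (dif_pos h)).trans
    (StrictMonoOn.orderIso _ _ (h.2.some.strictMono.strictMonoOn S)).symm

noncomputable def spreadSetIsoOfNotEquimorphic (S : Set (C i)) {j : I}
    (h : ¬ Equimorphic (C j) (C i)) : spreadSet S j ≃o C j :=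
  (OrderIso.setCongr _ _ (dif_neg h)).trans OrderIso.Set.univ

theorem equimorphic_spreadSet {S : Set (C i)} (hS : Equimorphic S (C i)) (j : I) :
    Equimorphic (spreadSet S j) (C j) := by
  by_cases h : Equimorphic (C j) (C i)
  · exact (Equimorphic.of_orderIso (spreadSetIsoOfEquimorphic S h)).trans (hS.trans h.symm)
  · exact .of_orderIso (spreadSetIsoOfNotEquimorphic S h)

theorem equimorphic_univ_sigma_spreadSet {S : Set (C i)} (hS : Equimorphic S (C i)) :
    Equimorphic (Set.sigma .univ (spreadSet S)) (Σ j, C j) :=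
  (Equimorphic.of_orderIso (OrderIso.univSigma _)).trans
    (Equimorphic.sigma (equimorphic_spreadSet hS))

theorem nonempty_orderIso_spreadSet {S S' : Set (C i)} (e : S ≃o S') (j : I) :
    Nonempty (spreadSet S j ≃o spreadSet S' j) := by
  by_cases h : Equimorphic (C j) (C i)
  · exact ⟨(spreadSetIsoOfEquimorphic S h).trans (e.trans (spreadSetIsoOfEquimorphic S' h).symm)⟩
  · exact ⟨(spreadSetIsoOfNotEquimorphic S h).trans (spreadSetIsoOfNotEquimorphic S' h).symm⟩

theorem nonempty_orderIso_of_spreadSet {S S' : Set (C i)} (hS : Equimorphic S (C i))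
    (e : (Σ j, spreadSet S j) ≃o Σ j, spreadSet S' j) : Nonempty (S ≃o S') := by
  rcases isEmpty_or_nonempty S with _ | ⟨⟨a⟩⟩
  · have : IsEmpty (C i) := Function.isEmpty hS.2.some
    exact ⟨OrderIso.ofIsEmpty _ _⟩
  have hi := Equimorphic.refl (C i)
  obtain ⟨f⟩ := e.nonempty_orderIso_sigma_fiber i ((spreadSetIsoOfEquimorphic S hi).symm a)
  set k := (e ⟨i, _⟩).1
  by_cases hk : Equimorphic (C k) (C i)
  · exact ⟨(spreadSetIsoOfEquimorphic S hi).symm.trans (f.trans (spreadSetIsoOfEquimorphic S' hk))⟩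
  · exact absurd ((Equimorphic.of_orderIso ((spreadSetIsoOfNotEquimorphic S' hk).symm.trans
      (f.symm.trans (spreadSetIsoOfEquimorphic S hi)))).trans hS) hk

theorem sibNumber_le_sibNumber_sigma (i : I) : sibNumber (C i) ≤ sibNumber (Σ j, C j) := by
  let Φ (S : {S : Set (C i) // Equimorphic S (C i)}) :
      {T : Set (Σ j, C j) // Equimorphic T (Σ j, C j)} :=
    ⟨Set.sigma .univ (spreadSet S.1), equimorphic_univ_sigma_spreadSet S.2⟩
  have hΦ (S S' : {S : Set (C i) // Equimorphic S (C i)}) :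
      Nonempty ((Φ S).1 ≃o (Φ S').1) ↔ Nonempty (S.1 ≃o S'.1) := by
    refine ⟨fun ⟨e⟩ => nonempty_orderIso_of_spreadSet S.2
      ((OrderIso.univSigma _).symm.trans (e.trans (OrderIso.univSigma _))), fun ⟨e⟩ => ?_⟩
    exact ⟨(OrderIso.univSigma _).trans ((OrderIso.sigmaCongrRight fun j =>
      (nonempty_orderIso_spreadSet e j).some).trans (OrderIso.univSigma _).symm)⟩
  refine mk_le_of_injective (f := Quotient.map Φ fun S S' => (hΦ S S').2) ?_
  rintro ⟨S⟩ ⟨S'⟩ h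
  exact Quotient.sound ((hΦ S S').1 (Quotient.exact h))

end Spread

theorem sib_ge_sup_components_general (I : Type) (C : I → Type)
    [∀ i, LinearOrder (C i)] :
    (⨆ i, sibNumber (C i)) ≤ sibNumber (Σ i, C i) ∧
    ∀ i, ℵ₀ ≤ sibNumber (C i) → ℵ₀ ≤ sibNumber (Σ i, C i) :=
  ⟨ciSup_le' sibNumber_le_sibNumber_sigma, fun i h => h.trans (sibNumber_le_sibNumber_sigma i)⟩

theorem sib_ge_sup_components (I : Type) (C : I → Type)
    [∀ i, LinearOrder (C i)] [∀ i, Nonempty (C i)] :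
    (⨆ i, sibNumber (C i)) ≤ sibNumber (Σ i, C i) ∧
    ∀ i, ℵ₀ ≤ sibNumber (C i) → ℵ₀ ≤ sibNumber (Σ i, C i) :=
  sib_ge_sup_components_general I C
end

section
/- Let D be a countable direct sum of chains such that some sibling of D contains a strictly increasing (with respect to embeddability) infinite sequence of components. Then D has exactly 2^{ℵ₀} siblings up to isomorphism. -/
open Cardinal

section Aux

variable {J₁ J₂ : Type*} {D₁ : J₁ → Type*} {D₂ : J₂ → Type*}

lemma sigma_fst_eq_of_le [∀ j, Preorder (D₁ j)] {a b : Σ j, D₁ j} (h : a ≤ b) :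
    a.1 = b.1 := (Sigma.le_def.1 h).1

/-- An embedding of disjoint sums of (linear) orders from an injection of indices together
with fiberwise embeddings. -/
noncomputable def sigmaEmb [∀ j, LinearOrder (D₁ j)] [∀ j, Preorder (D₂ j)]
    (φ : J₁ → J₂) (hφ : Function.Injective φ) (F : ∀ j, D₁ j ↪o D₂ (φ j)) :
    (Σ j, D₁ j) ↪o (Σ j, D₂ j) :=
  OrderEmbedding.ofMapLEIff (fun a => ⟨φ a.1, F a.1 a.2⟩) (by
    rintro ⟨j, x⟩ ⟨j', x'⟩
    constructor
    · intro h
      have h1 : φ j = φ j' := sigma_fst_eq_of_le h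
      obtain rfl := hφ h1
      rw [Sigma.mk_le_mk_iff] at h
      exact Sigma.mk_le_mk_iff.2 ((F j).le_iff_le.1 h)
    · intro h
      obtain rfl : j = j' := sigma_fst_eq_of_le h
      rw [Sigma.mk_le_mk_iff] at h
      exact Sigma.mk_le_mk_iff.2 ((F j).le_iff_le.2 h))

/-- A fiber of a disjoint sum is order isomorphic to the corresponding subtype. -/
def fiberIso [∀ j, Preorder (D₁ j)] (j : J₁) :
    D₁ j ≃o {a : Σ k, D₁ k // a.1 = j} where
  toFun x := ⟨⟨j, x⟩, rfl⟩
  invFun a := a.2 ▸ a.1.2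
  left_inv x := rfl
  right_inv := by rintro ⟨⟨k, x⟩, rfl⟩; rfl
  map_rel_iff' := by
    intro x y
    simp [Subtype.mk_le_mk]

/-- An order isomorphism of disjoint sums of nonempty linear orders induces for every index
on the left an index on the right with isomorphic fiber. -/
lemma exists_fiber_iso [∀ j, LinearOrder (D₁ j)] [∀ j, LinearOrder (D₂ j)]
    [∀ j, Nonempty (D₁ j)]
    (F : (Σ j, D₁ j) ≃o (Σ j, D₂ j)) (j₁ : J₁) :
    ∃ j₂ : J₂, Nonempty (D₁ j₁ ≃o D₂ j₂) := by
  classical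
  obtain ⟨x₀⟩ : Nonempty (D₁ j₁) := inferInstance
  set j₂ := (F ⟨j₁, x₀⟩).1 with hj₂
  have key : ∀ a : Σ k, D₁ k, a.1 = j₁ → (F a).1 = j₂ := by
    rintro ⟨k, x⟩ h
    subst h
    rcases le_total x x₀ with h | h
    · exact sigma_fst_eq_of_le (F.le_iff_le.2 (Sigma.mk_le_mk_iff.2 h))
    · exact (sigma_fst_eq_of_le (F.le_iff_le.2 (Sigma.mk_le_mk_iff.2 h))).symm
  have key2 : ∀ b : Σ k, D₂ k, b.1 = j₂ → (F.symm b).1 = j₁ := by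
    rintro ⟨k, y⟩ h
    subst h
    have heta : (⟨(F ⟨j₁, x₀⟩).1, (F ⟨j₁, x₀⟩).2⟩ : Σ k, D₂ k) = F ⟨j₁, x₀⟩ := rfl
    have base : (F.symm ⟨(F ⟨j₁, x₀⟩).1, (F ⟨j₁, x₀⟩).2⟩).1 = j₁ := by
      rw [heta, F.symm_apply_apply]
    rcases le_total y (F ⟨j₁, x₀⟩).2 with h | h
    · have := sigma_fst_eq_of_le (F.symm.le_iff_le.2 (Sigma.mk_le_mk_iff.2 h))
      rw [this]; exact base
    · have := sigma_fst_eq_of_le (F.symm.le_iff_le.2 (Sigma.mk_le_mk_iff.2 h))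
      rw [← this]; exact base
  refine ⟨j₂, ⟨(fiberIso j₁).trans (OrderIso.trans ?_ (fiberIso j₂).symm)⟩⟩
  exact
    { toFun := fun a => ⟨F a.1, key a.1 a.2⟩
      invFun := fun b => ⟨F.symm b.1, key2 b.1 b.2⟩
      left_inv := fun a => Subtype.ext (F.symm_apply_apply _)
      right_inv := fun b => Subtype.ext (F.apply_symm_apply _)
      map_rel_iff' := by
        intro a b
        simp only [Equiv.coe_fn_mk, Subtype.mk_le_mk]
        rw [F.le_iff_le]
        rfl }

end Aux

theorem sib_continuum_of_sibling_with_strictly_increasing (I : Type) (C : I → Type)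
    [∀ i, LinearOrder (C i)] [∀ i, Nonempty (C i)]
    [Countable I] [∀ i, Countable (C i)]
    (J : Type) (C' : J → Type) [∀ j, LinearOrder (C' j)] [∀ j, Nonempty (C' j)]
    (hsib : Equimorphic (Σ j, C' j) (Σ i, C i))
    (g : ℕ → J)
    (hinc : ∀ n, Nonempty (C' (g n) ↪o C' (g (n + 1))))
    (hstrict : ∀ n, ¬ Nonempty (C' (g (n + 1)) ↪o C' (g n))) :
    sibNumber (Σ i, C i) = Cardinal.continuum := by
  classical
  obtain ⟨⟨e⟩, ⟨f⟩⟩ := hsib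
  -- countability of J
  haveI hcnt' : Countable (Σ j, C' j) := e.injective.countable
  haveI hcntJ : Countable J := by
    have : Function.Injective (fun j : J => (⟨j, Classical.arbitrary (C' j)⟩ : Σ j, C' j)) := by
      intro a b h
      exact (Sigma.mk.inj_iff.1 h).1
    exact this.countable
  obtain ⟨ι, hι⟩ := Countable.exists_injective_nat J
  -- monotone chain of embeddings
  have hgmono : ∀ a b : ℕ, a ≤ b → Nonempty (C' (g a) ↪o C' (g b)) := by
    intro a b hab
    induction hab with
    | refl => exact ⟨OrderEmbedding.ofMapLEIff id (by intro x y; rfl)⟩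
    | step h ih =>
      obtain ⟨u⟩ := ih
      obtain ⟨v⟩ := hinc _
      exact ⟨u.trans v⟩
  have hnotemb : ∀ a b : ℕ, a < b → ¬ Nonempty (C' (g b) ↪o C' (g a)) := by
    rintro a b hab ⟨u⟩
    obtain ⟨v⟩ := hgmono (a + 1) b hab
    exact hstrict a ⟨v.trans u⟩
  have hnotiso : ∀ a b : ℕ, a ≠ b → ¬ Nonempty (C' (g a) ≃o C' (g b)) := by
    rintro a b hab ⟨u⟩
    rcases hab.lt_or_gt with h | h
    · exact hnotemb a b h ⟨u.symm.toOrderEmbedding⟩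
    · exact hnotemb b a h ⟨u.toOrderEmbedding⟩
  -- encoding of subsets of ℕ by infinite subsets containing all odds
  set E : Set ℕ → Set ℕ := fun A => {k | (k % 2 = 0 ∧ k / 2 ∈ A) ∨ k % 2 = 1} with hE
  have hodd : ∀ (A : Set ℕ) (n : ℕ), 2 * n + 1 ∈ E A := by
    intro A n; exact Or.inr (by omega)
  have heven : ∀ (A : Set ℕ) (n : ℕ), 2 * n ∈ E A ↔ n ∈ A := by
    intro A n
    constructor
    · rintro (⟨-, h⟩ | h)
      · have : 2 * n / 2 = n := by omega
        rwa [this] at h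
      · omega
    · intro h
      exact Or.inl ⟨by omega, by rwa [show 2 * n / 2 = n by omega]⟩
  -- the admitted index sets
  set JA : Set ℕ → Set J := fun A => {j | ∀ n, n ∉ E A → ¬ Nonempty (C' j ≃o C' (g n))}
    with hJA
  -- the redistribution map on indices
  set ψ : J → J := fun j =>
    if h : ∃ n, Nonempty (C' j ≃o C' (g n)) then g (2 * Nat.pair h.choose (ι j) + 1) else j
    with hψ
  have hψunm : ∀ j : J, ¬ (∃ n, Nonempty (C' j ≃o C' (g n))) → ψ j = j := by
    intro j h
    rw [hψ]
    beta_reduce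
    rw [dif_neg h]
  have hψm : ∀ (j : J) (h : ∃ n, Nonempty (C' j ≃o C' (g n))),
      ψ j = g (2 * Nat.pair h.choose (ι j) + 1) := by
    intro j h
    rw [hψ]
    beta_reduce
    rw [dif_pos h]
  have hψmem : ∀ (A : Set ℕ) (j : J), ψ j ∈ JA A := by
    intro A j
    by_cases h : ∃ n, Nonempty (C' j ≃o C' (g n))
    · intro n hn hiso
      rw [hψm j h] at hiso
      have : 2 * Nat.pair h.choose (ι j) + 1 = n := by
        by_contra hne
        exact hnotiso _ _ hne hiso
      exact hn (this ▸ hodd A _)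
    · intro n hn hiso
      rw [hψunm j h] at hiso
      exact h ⟨n, hiso⟩
  have hmatched : ∀ j : J, (∃ n, Nonempty (C' j ≃o C' (g n))) →
      ∃ n, Nonempty (C' (ψ j) ≃o C' (g n)) := by
    intro j h
    exact ⟨2 * Nat.pair h.choose (ι j) + 1, by rw [hψm j h]; exact ⟨OrderIso.refl _⟩⟩
  have hginj : Function.Injective g := by
    intro a b h
    by_contra hne
    exact hnotiso a b hne ⟨h ▸ OrderIso.refl _⟩
  have hψinj : Function.Injective ψ := by
    intro j j' h
    by_cases h1 : ∃ n, Nonempty (C' j ≃o C' (g n)) <;>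
      by_cases h2 : ∃ n, Nonempty (C' j' ≃o C' (g n))
    · rw [hψm j h1, hψm j' h2] at h
      have := hginj h
      have hp : Nat.pair h1.choose (ι j) = Nat.pair h2.choose (ι j') := by omega
      exact hι (Nat.pair_eq_pair.1 hp).2
    · exfalso
      have hm := hmatched j h1
      rw [h, hψunm j' h2] at hm
      exact h2 hm
    · exfalso
      have hm := hmatched j' h2
      rw [← h, hψunm j h1] at hm
      exact h1 hm
    · rwa [hψunm j h1, hψunm j' h2] at h
  have hψemb : ∀ j : J, Nonempty (C' j ↪o C' (ψ j)) := by
    intro j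
    by_cases h : ∃ n, Nonempty (C' j ≃o C' (g n))
    · obtain ⟨u⟩ := h.choose_spec
      obtain ⟨v⟩ := hgmono h.choose (2 * Nat.pair h.choose (ι j) + 1)
        ((Nat.left_le_pair h.choose (ι j)).trans (by omega))
      rw [hψm j h]
      exact ⟨u.toOrderEmbedding.trans v⟩
    · rw [hψunm j h]
      exact ⟨OrderEmbedding.ofMapLEIff id (by intro x y; rfl)⟩
  -- the sibling substructures
  have hΨ : ∀ A : Set ℕ, Nonempty ((Σ j, C' j) ↪o (Σ s : JA A, C' s.1)) := by
    intro A
    refine ⟨sigmaEmb (fun j => (⟨ψ j, hψmem A j⟩ : JA A)) ?_ (fun j => (hψemb j).some)⟩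
    intro a b h
    exact hψinj (Subtype.ext_iff.1 h)
  have hincl : ∀ A : Set ℕ, ((Σ s : JA A, C' s.1) ↪o (Σ j, C' j)) := by
    intro A
    exact sigmaEmb (fun s => s.1) Subtype.val_injective
      (fun s => OrderEmbedding.ofMapLEIff id (by intro x y; rfl))
  have emb : ∀ A : Set ℕ, (Σ s : JA A, C' s.1) ↪o (Σ i, C i) := fun A => (hincl A).trans e
  have hSiso : ∀ A : Set ℕ,
      Nonempty ((Σ s : JA A, C' s.1) ≃o (Set.range ⇑(emb A) : Set (Σ i, C i))) :=
    fun A => ⟨OrderEmbedding.orderIso⟩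
  have hequim : ∀ A : Set ℕ, Equimorphic (Set.range ⇑(emb A)) (Σ i, C i) := by
    intro A
    constructor
    · exact ⟨OrderEmbedding.subtype _⟩
    · obtain ⟨w⟩ := hΨ A
      obtain ⟨u⟩ := hSiso A
      exact ⟨(f.trans w).trans u.toOrderEmbedding⟩
  -- injectivity of the classes
  have key : ∀ A B : Set ℕ,
      Nonempty ((Σ s : JA A, C' s.1) ≃o (Σ s : JA B, C' s.1)) → A ⊆ B := by
    rintro A B ⟨G⟩ n₀ hn₀A
    by_contra hn₀B
    have htA : 2 * n₀ ∈ E A := (heven A n₀).2 hn₀A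
    have htB : 2 * n₀ ∉ E B := fun h => hn₀B ((heven B n₀).1 h)
    have hjA : g (2 * n₀) ∈ JA A := by
      intro n hn hiso
      have : 2 * n₀ = n := by
        by_contra hne
        exact hnotiso _ _ hne hiso
      exact hn (this ▸ htA)
    obtain ⟨s₂, ⟨u⟩⟩ := exists_fiber_iso G ⟨g (2 * n₀), hjA⟩
    exact s₂.2 (2 * n₀) htB ⟨u.symm⟩
  -- the injection into the set of classes
  set Φ : Set ℕ → Quotient (sibSetoid (Σ i, C i)) :=
    fun A => Quotient.mk _ ⟨Set.range ⇑(emb A), hequim A⟩ with hΦ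
  have hΦinj : Function.Injective Φ := by
    intro A B h
    have hrel := Quotient.exact h
    obtain ⟨w⟩ : Nonempty ((Set.range ⇑(emb A) : Set (Σ i, C i)) ≃o (Set.range ⇑(emb B) : Set (Σ i, C i))) := hrel
    obtain ⟨uA⟩ := hSiso A
    obtain ⟨uB⟩ := hSiso B
    have hAB : Nonempty ((Σ s : JA A, C' s.1) ≃o (Σ s : JA B, C' s.1)) :=
      ⟨(uA.trans w).trans uB.symm⟩
    obtain ⟨G⟩ := hAB
    exact le_antisymm (key A B ⟨G⟩) (key B A ⟨G.symm⟩)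
  -- conclude
  apply le_antisymm
  · calc sibNumber (Σ i, C i)
        ≤ #{S : Set (Σ i, C i) // Equimorphic S (Σ i, C i)} := Cardinal.mk_quotient_le
      _ ≤ #(Set (Σ i, C i)) := Cardinal.mk_subtype_le _
      _ ≤ Cardinal.continuum := by
          rw [Cardinal.mk_set]
          calc (2 : Cardinal) ^ #(Σ i, C i) ≤ 2 ^ Cardinal.aleph0 :=
              Cardinal.power_le_power_left two_ne_zero Cardinal.mk_le_aleph0
            _ = Cardinal.continuum := Cardinal.two_power_aleph0
  · have := Cardinal.mk_le_of_injective hΦinj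
    rwa [Cardinal.mk_set, Cardinal.mk_nat, Cardinal.two_power_aleph0] at this
end

section
/- If a countable direct sum of chains D contains an increasing (under embeddability) sequence of components with unbounded sizes, then D has exactly 2^{ℵ₀} siblings up to isomorphism. -/
set_option linter.unusedSectionVars false

open Cardinal

section Basics
variable {I : Type} {C : I → Type} [∀ i, LinearOrder (C i)]

lemma comparable_iff_fst_eq (x y : Σ i, C i) :
    (x ≤ y ∨ y ≤ x) ↔ x.1 = y.1 := by
  constructor
  · rintro (h | h)
    · exact (Sigma.le_def.1 h).1
    · exact ((Sigma.le_def.1 h).1).symm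
  · intro h
    obtain ⟨i, a⟩ := x
    obtain ⟨j, b⟩ := y
    cases h
    rcases le_total a b with h | h
    · exact Or.inl (Sigma.le_def.2 ⟨rfl, h⟩)
    · exact Or.inr (Sigma.le_def.2 ⟨rfl, h⟩)

lemma sigma_mk_le_mk {i : I} {a b : C i} :
    (⟨i, a⟩ : Σ i, C i) ≤ ⟨i, b⟩ ↔ a ≤ b := by
  rw [Sigma.le_def]
  constructor
  · rintro ⟨h, hle⟩
    simpa using hle
  · intro h; exact ⟨rfl, h⟩

lemma finEmbed {β : Type} [LinearOrder β] {n : ℕ} (h : (n : Cardinal) ≤ #β) :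
    Nonempty (Fin n ↪o β) := by
  rw [← Cardinal.mk_fin, Cardinal.le_def] at h
  obtain ⟨f⟩ := h
  classical
  let s : Finset β := (Finset.univ.image f)
  have hcard : s.card = n := by
    rw [Finset.card_image_of_injective _ f.injective, Finset.card_univ, Fintype.card_fin]
  exact ⟨(s.orderIsoOfFin hcard).toOrderEmbedding.trans (OrderEmbedding.subtype _)⟩

lemma embed_of_card_le {A B : Type} [LinearOrder A] [LinearOrder B]
    (hA : #A < ℵ₀) (h : #A ≤ #B) : Nonempty (A ↪o B) := by
  classical
  have : Finite A := by rwa [Cardinal.lt_aleph0_iff_finite] at hA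
  have : Fintype A := Fintype.ofFinite A
  have hc : (Fintype.card A : Cardinal) = #A := (Cardinal.mk_fintype A).symm
  obtain ⟨e⟩ := finEmbed (hc ▸ h)
  exact ⟨(monoEquivOfFin A rfl).symm.toOrderEmbedding.trans e⟩

/-- Build an order embedding of the full sum into a substructure from a
componentwise assignment. -/
lemma embed_into_subset (S : Set (Σ i, C i)) (θ : I → I) (hθ : Function.Injective θ)
    (hE : ∀ i, ∃ e : C i ↪o C (θ i), ∀ c, (⟨θ i, e c⟩ : Σ i, C i) ∈ S) :
    Nonempty ((Σ i, C i) ↪o S) := by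
  classical
  choose E hmem using hE
  refine ⟨OrderEmbedding.ofMapLEIff
    (fun x => ⟨⟨θ x.1, E x.1 x.2⟩, hmem _ _⟩) ?_⟩
  rintro ⟨i, a⟩ ⟨j, b⟩
  constructor
  · intro h
    have h' : (⟨θ i, E i a⟩ : Σ i, C i) ≤ ⟨θ j, E j b⟩ := h
    obtain ⟨hij, hle⟩ := Sigma.le_def.1 h'
    have hij' : i = j := hθ hij
    subst hij'
    refine Sigma.le_def.2 ⟨rfl, ?_⟩
    have : E i a ≤ E i b := by simpa using sigma_mk_le_mk.1 h'
    exact (E i).le_iff_le.1 this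
  · intro h
    obtain ⟨hij, hle⟩ := Sigma.le_def.1 h
    dsimp only at hij
    subst hij
    have : a ≤ b := by simpa using hle
    show (⟨θ i, E i a⟩ : Σ i, C i) ≤ ⟨θ i, E i b⟩
    exact sigma_mk_le_mk.2 ((E i).le_iff_le.2 this)

end Basics

section Inv
variable {I : Type} {C : I → Type} [∀ i, LinearOrder (C i)]

/-- The fiber of a substructure over a component index. -/
def fib (S : Set (Σ i, C i)) (i : I) : Set (C i) := {c | (⟨i, c⟩ : Σ i, C i) ∈ S}

/-- Number of components of `S` whose fiber has cardinality `v`. -/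
noncomputable def NS (S : Set (Σ i, C i)) (v : Cardinal) : Cardinal :=
  #{i : I // #(fib S i) = v}

def fibEquiv (S : Set (Σ i, C i)) (i : I) :
    ↥(fib S i) ≃ {z : ↥S // (z : Σ i, C i).1 = i} where
  toFun c := ⟨⟨⟨i, (c : C i)⟩, c.2⟩, rfl⟩
  invFun z := ⟨z.2 ▸ (z.1 : Σ i, C i).2, by
    obtain ⟨⟨⟨j, c⟩, hc⟩, (h : j = i)⟩ := z
    subst h; exact hc⟩
  left_inv c := rfl
  right_inv z := by
    obtain ⟨⟨⟨j, c⟩, hc⟩, (h : j = i)⟩ := z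
    subst h; rfl

variable {S T : Set (Σ i, C i)}

lemma iso_fst_key (e : ↥S ≃o ↥T) (z w : ↥S) :
    (z : Σ i, C i).1 = (w : Σ i, C i).1 ↔ ((e z : ↥T) : Σ i, C i).1 = ((e w : ↥T) : Σ i, C i).1 := by
  rw [← comparable_iff_fst_eq, ← comparable_iff_fst_eq]
  have h1 : (z : Σ i, C i) ≤ w ↔ ((e z : ↥T) : Σ i, C i) ≤ (e w : ↥T) := by
    rw [Subtype.coe_le_coe, Subtype.coe_le_coe, e.le_iff_le]
  have h2 : (w : Σ i, C i) ≤ z ↔ ((e w : ↥T) : Σ i, C i) ≤ (e z : ↥T) := by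
    rw [Subtype.coe_le_coe, Subtype.coe_le_coe, e.le_iff_le]
  rw [h1, h2]

lemma NS_le_of_iso (e : ↥S ≃o ↥T) (v : Cardinal) (hv : v ≠ 0) : NS S v ≤ NS T v := by
  classical
  have hF : ∀ i : {i : I // #(fib S i) = v}, ∃ i' : I,
      (∀ z : ↥S, (z : Σ i, C i).1 = (i : I) ↔ ((e z : ↥T) : Σ i, C i).1 = i') ∧
      #(fib T i') = v := by
    rintro ⟨i, hi⟩
    have hne : Nonempty ↥(fib S i) := by
      rw [← Cardinal.mk_ne_zero_iff, hi]; exact hv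
    obtain ⟨c0⟩ := hne
    set x : ↥S := ⟨⟨i, (c0 : C i)⟩, c0.2⟩ with hx
    refine ⟨((e x : ↥T) : Σ i, C i).1, ?_, ?_⟩
    · intro z
      have := iso_fst_key e z x
      simpa using this
    · have e1 : ↥(fib S i) ≃ {z : ↥S // (z : Σ i, C i).1 = i} := fibEquiv S i
      have e3 : ↥(fib T (((e x : ↥T) : Σ i, C i).1)) ≃
          {w : ↥T // (w : Σ i, C i).1 = ((e x : ↥T) : Σ i, C i).1} :=
        fibEquiv T _
      have e2 : {z : ↥S // (z : Σ i, C i).1 = i} ≃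
          {w : ↥T // (w : Σ i, C i).1 = ((e x : ↥T) : Σ i, C i).1} := by
        refine Equiv.subtypeEquiv e.toEquiv ?_
        intro z
        have := iso_fst_key e z x
        simpa using this
      rw [← hi]
      exact Cardinal.mk_congr (e3.trans (e2.symm.trans e1.symm))
  choose F hF1 hF2 using hF
  have hFinj : Function.Injective (fun i => (⟨F i, hF2 i⟩ : {i : I // #(fib T i) = v})) := by
    rintro ⟨i, hi⟩ ⟨j, hj⟩ h
    simp only [Subtype.mk.injEq] at h
    have hnei : Nonempty ↥(fib S i) := by
      rw [← Cardinal.mk_ne_zero_iff, hi]; exact hv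
    obtain ⟨ci⟩ := hnei
    set xi : ↥S := ⟨⟨i, (ci : C i)⟩, ci.2⟩ with hxi
    have h1 : ((e xi : ↥T) : Σ i, C i).1 = F ⟨i, hi⟩ := (hF1 ⟨i, hi⟩ xi).1 rfl
    have h2 : (xi : Σ i, C i).1 = j := (hF1 ⟨j, hj⟩ xi).2 (by rw [h1, h])
    exact Subtype.ext (show i = j from h2)
  exact Cardinal.mk_le_of_injective hFinj

lemma NS_eq_of_iso (e : ↥S ≃o ↥T) (v : Cardinal) (hv : v ≠ 0) : NS S v = NS T v :=
  le_antisymm (NS_le_of_iso e v hv) (NS_le_of_iso e.symm v hv)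

end Inv

section Construction
open scoped Classical
variable {I : Type} {C : I → Type} [∀ i, LinearOrder (C i)]
variable (g : ℕ → I) (v p : ℕ → ℕ)
variable (W : ∀ k, Set (C (g (p k)))) (w1 : ∀ k, C (g (p k)))

/-- The kept part of each component. -/
def KX (X : Set ℕ) (i : I) : Set (C i) :=
  {c | (∃ k, ∃ h : g (p k) = i, ((k ∈ X ∧ h.symm ▸ c ∈ W k) ∨ (k ∉ X ∧ h.symm ▸ c = w1 k)))
    ∨ ((¬ ∃ k, g (p k) = i) ∧ ¬ ∃ j, #(C i) = (v j : Cardinal))}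

/-- The substructure associated to `X ⊆ ℕ`. -/
def SX (X : Set ℕ) : Set (Σ i, C i) := {x | x.2 ∈ KX g v p W w1 X x.1}

lemma fib_SX (X : Set ℕ) (i : I) : fib (SX g v p W w1 X) i = KX g v p W w1 X i := rfl

lemma KX_at_p (hgp : Function.Injective (g ∘ p)) (X : Set ℕ) (k : ℕ) :
    KX g v p W w1 X (g (p k)) = if k ∈ X then W k else {w1 k} := by
  classical
  ext c
  constructor
  · rintro (⟨k', h', hc⟩ | ⟨h1, _⟩)
    · have hk : k' = k := hgp h'
      subst hk
      rcases hc with ⟨hk1, hk2⟩ | ⟨hk1, hk2⟩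
      · rw [if_pos hk1]; exact hk2
      · rw [if_neg hk1]; exact hk2
    · exact absurd ⟨k, rfl⟩ h1
  · intro hc
    by_cases hk : k ∈ X
    · rw [if_pos hk] at hc
      exact Or.inl ⟨k, rfl, Or.inl ⟨hk, hc⟩⟩
    · rw [if_neg hk] at hc
      exact Or.inl ⟨k, rfl, Or.inr ⟨hk, hc⟩⟩

lemma KX_at_other (X : Set ℕ) (i : I) (h : ¬ ∃ k, g (p k) = i) :
    KX g v p W w1 X i = if ∃ j, #(C i) = (v j : Cardinal) then ∅ else Set.univ := by
  classical
  ext c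
  constructor
  · rintro (⟨k', h', _⟩ | ⟨_, h2⟩)
    · exact absurd ⟨k', h'⟩ h
    · rw [if_neg h2]; trivial
  · intro hc
    by_cases h2 : ∃ j, #(C i) = (v j : Cardinal)
    · rw [if_pos h2] at hc; exact absurd hc (Set.notMem_empty c)
    · exact Or.inr ⟨h, h2⟩


variable {X : Set ℕ}

lemma fib_val (hgp : Function.Injective (g ∘ p))
    (hWcard : ∀ k, #(W k) = (v k : Cardinal)) (hv2 : ∀ k, 2 ≤ v k)
    (hvinj : Function.Injective v) {k : ℕ} :
    ∀ i : I, #(KX g v p W w1 X i) = (v k : Cardinal) → i = g (p k) ∧ k ∈ X := by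
  intro i hi
  by_cases h : ∃ k', g (p k') = i
  · obtain ⟨k', hk'⟩ := h
    subst hk'
    rw [KX_at_p g v p W w1 hgp] at hi
    by_cases hk1 : k' ∈ X
    · rw [if_pos hk1, hWcard] at hi
      have hkk : k' = k := hvinj (Nat.cast_injective hi)
      subst hkk
      exact ⟨rfl, hk1⟩
    · rw [if_neg hk1, Cardinal.mk_singleton] at hi
      exfalso
      have h1 : ((1 : ℕ) : Cardinal) = (v k : Cardinal) := by
        simpa using hi
      have := Nat.cast_injective h1
      have := hv2 k
      omega
  · rw [KX_at_other g v p W w1 X i h] at hi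
    by_cases h2 : ∃ j, #(C i) = (v j : Cardinal)
    · rw [if_pos h2, Cardinal.mk_emptyCollection] at hi
      exfalso
      have h1 : ((0 : ℕ) : Cardinal) = (v k : Cardinal) := by simpa using hi
      have := Nat.cast_injective h1
      have := hv2 k
      omega
    · rw [if_neg h2, Cardinal.mk_univ] at hi
      exact absurd ⟨k, hi⟩ h2

lemma NS_SX (hgp : Function.Injective (g ∘ p))
    (hWcard : ∀ k, #(W k) = (v k : Cardinal)) (hv2 : ∀ k, 2 ≤ v k)
    (hvinj : Function.Injective v) (k : ℕ) :
    NS (SX g v p W w1 X) ((v k : Cardinal)) = if k ∈ X then 1 else 0 := by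
  have key := fib_val g v p W w1 hgp hWcard hv2 hvinj (X := X) (k := k)
  simp only [NS, fib_SX]
  by_cases hk : k ∈ X
  · rw [if_pos hk]
    rw [Cardinal.eq_one_iff_unique]
    constructor
    · constructor
      rintro ⟨i, hi⟩ ⟨i', hi'⟩
      have h1 := (key i hi).1
      have h2 := (key i' hi').1
      exact Subtype.ext (h1.trans h2.symm)
    · refine ⟨⟨g (p k), ?_⟩⟩
      rw [KX_at_p g v p W w1 hgp, if_pos hk]
      exact hWcard k
  · rw [if_neg hk]
    rw [Cardinal.mk_eq_zero_iff]
    constructor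
    rintro ⟨i, hi⟩
    exact hk (key i hi).2

lemma transEmbed (hinc : ∀ n, Nonempty (C (g n) ↪o C (g (n + 1)))) :
    ∀ m n : ℕ, m ≤ n → Nonempty (C (g m) ↪o C (g n)) := by
  intro m n h
  induction n, h using Nat.le_induction with
  | base => exact ⟨(OrderIso.refl _).toOrderEmbedding⟩
  | succ n hmn ih =>
    obtain ⟨e⟩ := ih
    obtain ⟨f⟩ := hinc n
    exact ⟨e.trans f⟩

variable (γ : ℕ → ℕ) (t : I → ℕ)

/-- The component reassignment used to embed the whole sum into `SX`. -/
noncomputable def theta (i : I) : I :=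
  if h : ∃ m, g m = i then g (γ (2 * h.choose))
  else if h2 : ∃ j, #(C i) = (v j : Cardinal) then
    g (γ (2 * Nat.pair (t i) (v h2.choose) + 1))
  else i

lemma KX_at_γ (hinj : Function.Injective g) (hpγ : ∀ k j, p k ≠ γ j)
    (hgood : ∀ j k, #(C (g (γ j))) ≠ (v k : Cardinal)) (j : ℕ) :
    KX g v p W w1 X (g (γ j)) = Set.univ := by
  rw [KX_at_other g v p W w1 X _ (by rintro ⟨k, hk⟩; exact hpγ k j (hinj hk))]
  rw [if_neg (by rintro ⟨j', hj'⟩; exact hgood j j' hj')]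

lemma mem_SX_γ (hinj : Function.Injective g) (hpγ : ∀ k j, p k ≠ γ j)
    (hgood : ∀ j k, #(C (g (γ j))) ≠ (v k : Cardinal)) (j : ℕ) (c : C (g (γ j))) :
    (⟨g (γ j), c⟩ : Σ i, C i) ∈ SX g v p W w1 X := by
  show c ∈ KX g v p W w1 X (g (γ j))
  rw [KX_at_γ g v p W w1 γ hinj hpγ hgood]
  trivial

lemma theta_injective (hinj : Function.Injective g) (hγ : StrictMono γ)
    (ht : Function.Injective t) :
    Function.Injective (theta (C := C) g v γ t) := by
  intro a b hab
  unfold theta at hab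
  by_cases ha : ∃ m, g m = a <;> by_cases hb : ∃ m, g m = b
  · rw [dif_pos ha, dif_pos hb] at hab
    have h2 : ha.choose = hb.choose := by
      have := hinj hab
      have := hγ.injective this
      omega
    rw [← ha.choose_spec, ← hb.choose_spec, h2]
  · rw [dif_pos ha] at hab
    by_cases hb2 : ∃ j, #(C b) = (v j : Cardinal)
    · rw [dif_neg hb, dif_pos hb2] at hab
      have := hγ.injective (hinj hab)
      omega
    · rw [dif_neg hb, dif_neg hb2] at hab
      exact absurd ⟨_, hab⟩ hb
  · rw [dif_pos hb] at hab
    by_cases ha2 : ∃ j, #(C a) = (v j : Cardinal)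
    · rw [dif_neg ha, dif_pos ha2] at hab
      have := hγ.injective (hinj hab)
      omega
    · rw [dif_neg ha, dif_neg ha2] at hab
      exact absurd ⟨_, hab.symm⟩ ha
  · by_cases ha2 : ∃ j, #(C a) = (v j : Cardinal) <;>
      by_cases hb2 : ∃ j, #(C b) = (v j : Cardinal)
    · rw [dif_neg ha, dif_neg hb, dif_pos ha2, dif_pos hb2] at hab
      have h3 := hγ.injective (hinj hab)
      have h4 : Nat.pair (t a) (v ha2.choose) = Nat.pair (t b) (v hb2.choose) := by omega
      exact ht (Nat.pair_eq_pair.1 h4).1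
    · rw [dif_neg ha, dif_neg hb, dif_pos ha2, dif_neg hb2] at hab
      exact absurd ⟨_, hab⟩ hb
    · rw [dif_neg ha, dif_neg hb, dif_neg ha2, dif_pos hb2] at hab
      exact absurd ⟨_, hab.symm⟩ ha
    · rw [dif_neg ha, dif_neg hb, dif_neg ha2, dif_neg hb2] at hab
      exact hab

lemma embed_SX (hinj : Function.Injective g)
    (hinc : ∀ n, Nonempty (C (g n) ↪o C (g (n + 1))))
    (hγ : StrictMono γ) (ht : Function.Injective t)
    (hpγ : ∀ k j, p k ≠ γ j)
    (hgood : ∀ j k, #(C (g (γ j))) ≠ (v k : Cardinal))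
    (hbig : ∀ u j : ℕ, u ≤ j → (u : Cardinal) ≤ #(C (g (γ j)))) :
    Nonempty ((Σ i, C i) ↪o SX g v p W w1 X) := by
  apply embed_into_subset _ (theta (C := C) g v γ t) (theta_injective g v γ t hinj hγ ht)
  intro i
  by_cases h : ∃ m, g m = i
  · obtain ⟨m, rfl⟩ := h
    have hθ : theta (C := C) g v γ t (g m) = g (γ (2 * m)) := by
      have h' : ∃ m', g m' = g m := ⟨m, rfl⟩
      have hch : h'.choose = m := hinj h'.choose_spec
      rw [theta, dif_pos h', hch]
    rw [hθ]
    obtain ⟨e⟩ := transEmbed g hinc m (γ (2 * m))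
      (le_trans (by omega) (hγ.le_apply))
    exact ⟨e, fun c => mem_SX_γ g v p W w1 γ hinj hpγ hgood _ _⟩
  · by_cases h2 : ∃ j, #(C i) = (v j : Cardinal)
    · have hθ : theta (C := C) g v γ t i = g (γ (2 * Nat.pair (t i) (v h2.choose) + 1)) := by
        rw [theta, dif_neg h, dif_pos h2]
      rw [hθ]
      have hsz : (v h2.choose : Cardinal) ≤ #(C (g (γ (2 * Nat.pair (t i) (v h2.choose) + 1)))) := by
        apply hbig
        have := Nat.right_le_pair (t i) (v h2.choose)
        omega
      have hfin : #(C i) < ℵ₀ := by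
        rw [h2.choose_spec]; exact Cardinal.nat_lt_aleph0 _
      obtain ⟨e⟩ := embed_of_card_le hfin (h2.choose_spec.le.trans hsz)
      exact ⟨e, fun c => mem_SX_γ g v p W w1 γ hinj hpγ hgood _ _⟩
    · have hθ : theta (C := C) g v γ t i = i := by
        rw [theta, dif_neg h, dif_neg h2]
      rw [hθ]
      refine ⟨(OrderIso.refl _).toOrderEmbedding, fun c => ?_⟩
      show c ∈ KX g v p W w1 X i
      rw [KX_at_other g v p W w1 X i (by rintro ⟨k, hk⟩; exact h ⟨p k, hk⟩), if_neg h2]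
      trivial

end Construction

section Wiring
variable {I : Type} {C : I → Type} [∀ i, LinearOrder (C i)] [∀ i, Nonempty (C i)]
  [Countable I] [∀ i, Countable (C i)]

lemma continuum_le_sib (g : ℕ → I) (hinj : Function.Injective g)
    (hinc : ∀ n, Nonempty (C (g n) ↪o C (g (n + 1))))
    (v p γ : ℕ → ℕ)
    (hv2 : ∀ k, 2 ≤ v k) (hvinj : Function.Injective v)
    (hp : Function.Injective p) (hγ : StrictMono γ)
    (hpγ : ∀ k j, p k ≠ γ j)
    (hcap : ∀ k, (v k : Cardinal) ≤ #(C (g (p k))))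
    (hgood : ∀ j k, #(C (g (γ j))) ≠ (v k : Cardinal))
    (hbig : ∀ u j : ℕ, u ≤ j → (u : Cardinal) ≤ #(C (g (γ j)))) :
    Cardinal.continuum ≤ sibNumber (Σ i, C i) := by
  classical
  have hW : ∀ k, ∃ W : Set (C (g (p k))), #W = (v k : Cardinal) := by
    intro k
    have h1 := hcap k
    rw [← Cardinal.mk_fin (v k), Cardinal.le_def] at h1
    obtain ⟨f⟩ := h1
    exact ⟨Set.range f, (Cardinal.mk_range_eq f f.injective).trans (Cardinal.mk_fin (v k))⟩
  choose W hWcard using hW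
  set w1 : ∀ k, C (g (p k)) := fun k => Classical.arbitrary _ with hw1
  obtain ⟨t, ht⟩ := exists_injective_nat I
  have hgp : Function.Injective (g ∘ p) := hinj.comp hp
  have hequim : ∀ X : Set ℕ, Equimorphic ↥(SX g v p W w1 X) (Σ i, C i) := by
    intro X
    exact ⟨⟨OrderEmbedding.subtype _⟩,
      embed_SX g v p W w1 γ t hinj hinc hγ ht hpγ hgood hbig⟩
  set Φ : Set ℕ → Quotient (sibSetoid (Σ i, C i)) :=
    fun X => Quotient.mk _ ⟨SX g v p W w1 X, hequim X⟩ with hΦ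
  have hΦinj : Function.Injective Φ := by
    intro X Y h
    have hrel := Quotient.exact h
    obtain ⟨e⟩ := hrel
    ext k
    have hvk0 : ((v k : ℕ) : Cardinal) ≠ 0 := by
      rw [Nat.cast_ne_zero]
      have := hv2 k; omega
    have h1 : NS (SX g v p W w1 X) ((v k : ℕ) : Cardinal)
        = NS (SX g v p W w1 Y) ((v k : ℕ) : Cardinal) := NS_eq_of_iso e _ hvk0
    rw [NS_SX g v p W w1 hgp hWcard hv2 hvinj k,
        NS_SX g v p W w1 hgp hWcard hv2 hvinj k] at h1
    by_cases hX : k ∈ X <;> by_cases hY : k ∈ Y <;>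
      simp [hX, hY] at h1 <;> tauto
  calc Cardinal.continuum = #(Set ℕ) := by
        rw [Cardinal.mk_set, Cardinal.mk_nat, Cardinal.two_power_aleph0]
    _ ≤ #(Quotient (sibSetoid (Σ i, C i))) := Cardinal.mk_le_of_injective hΦinj
    _ = sibNumber (Σ i, C i) := rfl

lemma sib_le_continuum : sibNumber (Σ i, C i) ≤ Cardinal.continuum := by
  have h1 : sibNumber (Σ i, C i)
      ≤ #{S : Set (Σ i, C i) // Equimorphic S (Σ i, C i)} := Cardinal.mk_quotient_le
  have h2 : #{S : Set (Σ i, C i) // Equimorphic S (Σ i, C i)} ≤ #(Set (Σ i, C i)) :=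
    Cardinal.mk_subtype_le _
  have h3 : #(Set (Σ i, C i)) = 2 ^ #(Σ i, C i) := Cardinal.mk_set
  have h4 : (2 : Cardinal) ^ #(Σ i, C i) ≤ 2 ^ ℵ₀ :=
    Cardinal.power_le_power_left two_ne_zero Cardinal.mk_le_aleph0
  calc sibNumber (Σ i, C i) ≤ #(Set (Σ i, C i)) := h1.trans h2
    _ ≤ 2 ^ ℵ₀ := h3.le.trans h4
    _ = Cardinal.continuum := Cardinal.two_power_aleph0

end Wiring

theorem sib_continuum_of_increasing_unbounded (I : Type) (C : I → Type)
    [∀ i, LinearOrder (C i)] [∀ i, Nonempty (C i)]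
    [Countable I] [∀ i, Countable (C i)]
    (g : ℕ → I) (hinj : Function.Injective g)
    (hinc : ∀ n, Nonempty (C (g n) ↪o C (g (n + 1))))
    (hunbdd : ∀ M : ℕ, ∃ n, (M : Cardinal) < #(C (g n))) :
    sibNumber (Σ i, C i) = Cardinal.continuum := by
  classical
  refine le_antisymm sib_le_continuum ?_
  have kmono : ∀ m n : ℕ, m ≤ n → #(C (g m)) ≤ #(C (g n)) := by
    intro m n h
    obtain ⟨e⟩ := transEmbed g hinc m n h
    exact Cardinal.mk_le_of_injective e.injective
  by_cases hcase : ∃ N, ℵ₀ ≤ #(C (g N))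
  · obtain ⟨N, hN⟩ := hcase
    have hall : ∀ n, N ≤ n → ℵ₀ ≤ #(C (g n)) := fun n hn => hN.trans (kmono N n hn)
    refine continuum_le_sib g hinj hinc (fun k => k + 2) (fun k => 2 * (N + k) + 2)
      (fun j => 2 * (N + j) + 1) ?_ ?_ ?_ ?_ ?_ ?_ ?_ ?_
    · intro k; show 2 ≤ k + 2; omega
    · intro a b h
      have h' : a + 2 = b + 2 := h
      omega
    · intro a b h
      have h' : 2 * (N + a) + 2 = 2 * (N + b) + 2 := h
      omega
    · intro a b h
      show 2 * (N + a) + 1 < 2 * (N + b) + 1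
      omega
    · intro k j
      show 2 * (N + k) + 2 ≠ 2 * (N + j) + 1
      omega
    · intro k
      exact le_trans (Cardinal.nat_lt_aleph0 _).le
        (hall (2 * (N + k) + 2) (by omega))
    · intro j k h
      have h2 := hall (2 * (N + j) + 1) (by omega)
      rw [h] at h2
      exact absurd h2 (Cardinal.nat_lt_aleph0 _).not_ge
    · intro u j _
      exact le_trans (Cardinal.nat_lt_aleph0 _).le
        (hall (2 * (N + j) + 1) (by omega))
  · push_neg at hcase
    set s : ℕ → ℕ := fun n => (#(C (g n))).toNat with hs_def
    have hs : ∀ n, (s n : Cardinal) = #(C (g n)) := fun n =>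
      Cardinal.cast_toNat_of_lt_aleph0 (hcase n)
    have smono : ∀ m n : ℕ, m ≤ n → s m ≤ s n := by
      intro m n h
      rw [← Nat.cast_le (α := Cardinal), hs, hs]
      exact kmono m n h
    have sunb : ∀ M : ℕ, ∃ n, M < s n := by
      intro M
      obtain ⟨n, hn⟩ := hunbdd M
      exact ⟨n, by rwa [← hs, Nat.cast_lt] at hn⟩
    set V : Set ℕ := {a | ∃ j, s (2 * j + 1) = a} with hV_def
    have hVunb : ∀ M : ℕ, ∃ a ∈ V, M < a := by
      intro M
      obtain ⟨n, hn⟩ := sunb M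
      exact ⟨s (2 * n + 1), ⟨n, rfl⟩, lt_of_lt_of_le hn (smono n (2 * n + 1) (by omega))⟩
    have hVinf : V.Infinite := by
      apply Set.infinite_of_not_bddAbove
      rintro ⟨b, hb⟩
      obtain ⟨a, ha, hab⟩ := hVunb b
      exact absurd (hb ha) (by omega)
    set e : ℕ → ℕ := Nat.nth (· ∈ V) with he_def
    have hemono : StrictMono e := Nat.nth_strictMono hVinf
    have hemem : ∀ j, e j ∈ V := fun j => Nat.nth_mem_of_infinite hVinf j
    have hγex : ∀ j : ℕ, ∃ m, s (2 * m + 1) = e (2 * j) := fun j => hemem (2 * j)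
    choose u hu using hγex
    set γ : ℕ → ℕ := fun j => 2 * u j + 1 with hγ_def
    have hsγ : ∀ j, s (γ j) = e (2 * j) := hu
    have hγmono : StrictMono γ := by
      intro a b hab
      have h1 : s (γ a) < s (γ b) := by
        rw [hsγ, hsγ]
        exact hemono (by omega)
      by_contra hle
      push_neg at hle
      have h2 := smono (γ b) (γ a) hle
      omega
    have hpex : ∀ k : ℕ, ∃ n, e (2 * k + 3) < s n := fun k => sunb _
    choose r hr using hpex
    set R : ℕ → ℕ := fun k => (Finset.range (k + 1)).sup r with hR_def
    have hrR : ∀ k, r k ≤ R k := fun k =>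
      Finset.le_sup (Finset.mem_range.2 (by omega))
    have hRmono : ∀ a b : ℕ, a ≤ b → R a ≤ R b := by
      intro a b hab
      apply Finset.sup_mono
      intro x hx
      rw [Finset.mem_range] at hx ⊢
      omega
    set p : ℕ → ℕ := fun k => 2 * (R k + k + 1) with hp_def
    have hpmono : StrictMono p := by
      intro a b hab
      have h1 := hRmono a b (le_of_lt hab)
      show 2 * (R a + a + 1) < 2 * (R b + b + 1)
      omega
    have hsp : ∀ k, e (2 * k + 3) < s (p k) := by
      intro k
      refine lt_of_lt_of_le (hr k) (smono _ _ ?_)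
      show r k ≤ 2 * (R k + k + 1)
      have := hrR k
      omega
    refine continuum_le_sib g hinj hinc (fun k => e (2 * k + 3)) p γ
      ?_ ?_ hpmono.injective hγmono ?_ ?_ ?_ ?_
    · intro k
      show 2 ≤ e (2 * k + 3)
      have := hemono.le_apply (x := 2 * k + 3)
      omega
    · intro a b hab
      have hab' : e (2 * a + 3) = e (2 * b + 3) := hab
      have := hemono.injective hab'
      omega
    · intro k j
      show 2 * (R k + k + 1) ≠ 2 * u j + 1
      omega
    · intro k
      rw [← hs]
      exact_mod_cast (hsp k).le
    · intro j k h
      rw [← hs (γ j)] at h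
      have h2 : s (γ j) = e (2 * k + 3) := by exact_mod_cast h
      rw [hsγ j] at h2
      have := hemono.injective h2
      omega
    · intro u' j hj
      rw [← hs]
      have h1 : u' ≤ s (γ j) := by
        rw [hsγ]
        have := hemono.le_apply (x := 2 * j)
        omega
      exact_mod_cast h1
end

section
/- Let D be a direct sum of chains with finitely many trivial (singleton) components. Then D ⊕ C^1 (D together with one extra isolated point) embeds in D if and only if D contains an infinite sequence of non-trivial components increasing under embeddability. -/
open Cardinal

section AuxSib

variable {I : Type} {C : I → Type}

/-- Cast order embedding along an equality of indices. -/
private def castEmbSib (C : I → Type) [∀ i, Preorder (C i)] {i j : I} (h : i = j) :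
    C i ↪o C j := by subst h; exact (OrderIso.refl _).toOrderEmbedding

variable [∀ i, LinearOrder (C i)]

private lemma sigma_le_fst_sib {a b : Σ i, C i} (h : a ≤ b) : a.1 = b.1 := by
  cases h; rfl

private lemma sigma_comparable_sib {a b : Σ i, C i} (h : a.1 = b.1) : a ≤ b ∨ b ≤ a := by
  obtain ⟨j, c⟩ := a
  obtain ⟨j', d⟩ := b
  dsimp at h
  subst h
  rcases le_total c d with h | h
  · exact Or.inl (Sigma.mk_le_mk_iff.2 h)
  · exact Or.inr (Sigma.mk_le_mk_iff.2 h)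

private lemma sigma_le_iff_cast_sib {a b : Σ i, C i} {j : I} (ha : a.1 = j) (hb : b.1 = j) :
    (ha ▸ a.2 : C j) ≤ hb ▸ b.2 ↔ a ≤ b := by
  obtain ⟨j₁, x⟩ := a
  obtain ⟨j₂, y⟩ := b
  dsimp at ha hb
  subst ha; subst hb
  exact Sigma.mk_le_mk_iff.symm

/-- Construction: given an injective shift of indices with embeddings into the shifted
components, and an index outside the range, `D ⊕ C¹` embeds into `D`. -/
private lemma construct_sib (φ : I → I) (hφ : Function.Injective φ)
    (ψ : ∀ i, C i ↪o C (φ i)) (j₀ : I) (hj₀ : j₀ ∉ Set.range φ) (c₀ : C j₀) :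
    Nonempty (((Σ i, C i) ⊕ PUnit) ↪o Σ i, C i) := by
  refine ⟨OrderEmbedding.ofMapLEIff
    (Sum.elim (fun p => (⟨φ p.1, ψ p.1 p.2⟩ : Σ i, C i)) (fun _ => ⟨j₀, c₀⟩)) ?_⟩
  rintro (⟨i, a⟩ | ⟨⟩) (⟨i', b⟩ | ⟨⟩)
  · simp only [Sum.elim_inl]
    constructor
    · intro h
      obtain rfl : i = i' := hφ (sigma_le_fst_sib h)
      rw [Sigma.mk_le_mk_iff] at h
      exact Sum.inl_le_inl_iff.2 (Sigma.mk_le_mk_iff.2 ((ψ i).le_iff_le.1 h))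
    · intro h
      obtain rfl : i = i' := sigma_le_fst_sib (Sum.inl_le_inl_iff.1 h)
      have hab : a ≤ b := Sigma.mk_le_mk_iff.1 (Sum.inl_le_inl_iff.1 h)
      exact Sigma.mk_le_mk_iff.2 ((ψ i).le_iff_le.2 hab)
  · refine iff_of_false (fun h => ?_) Sum.not_inl_le_inr
    exact hj₀ ⟨i, sigma_le_fst_sib h⟩
  · refine iff_of_false (fun h => ?_) Sum.not_inr_le_inl
    exact hj₀ ⟨i', (sigma_le_fst_sib h).symm⟩
  · simp

private lemma orbit_inj_sib {α : Type} (Φ : α → α) (hΦ : Function.Injective Φ) (j₀ : α)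
    (hj : j₀ ∉ Set.range Φ) : Function.Injective fun n => Φ^[n] j₀ := by
  intro m n h
  dsimp at h
  induction m generalizing n with
  | zero =>
    cases n with
    | zero => rfl
    | succ k =>
      rw [Function.iterate_succ_apply'] at h
      exact absurd ⟨_, h.symm.trans (Function.iterate_zero_apply Φ j₀)⟩ hj
  | succ m ih =>
    cases n with
    | zero =>
      rw [Function.iterate_succ_apply'] at h
      exact absurd ⟨_, h.trans (Function.iterate_zero_apply Φ j₀)⟩ hj
    | succ k =>
      rw [Function.iterate_succ_apply', Function.iterate_succ_apply'] at h
      exact congrArg Nat.succ (ih (hΦ h))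

end AuxSib

theorem add_singleton_embeds_iff_increasing (I : Type) (C : I → Type)
    [∀ i, LinearOrder (C i)] [∀ i, Nonempty (C i)]
    (htriv : {i | Subsingleton (C i)}.Finite) :
    Nonempty (((Σ i, C i) ⊕ PUnit) ↪o Σ i, C i) ↔
      ∃ g : ℕ → I, Function.Injective g ∧ (∀ n, Nontrivial (C (g n))) ∧
        ∀ n, Nonempty (C (g n) ↪o C (g (n + 1))) := by
  constructor
  · rintro ⟨F⟩
    -- extract the index map
    have a₀ : ∀ i, C i := fun i => Classical.arbitrary _
    set Φ : I → I := fun i => (F (Sum.inl ⟨i, a₀ i⟩)).1 with hΦdef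
    have hcomp : ∀ i (a : C i), (F (Sum.inl ⟨i, a⟩)).1 = Φ i := by
      intro i a
      rcases le_total a (a₀ i) with h | h
      · exact sigma_le_fst_sib (F.monotone (Sum.inl_le_inl_iff.2 (Sigma.mk_le_mk_iff.2 h)))
      · exact (sigma_le_fst_sib
          (F.monotone (Sum.inl_le_inl_iff.2 (Sigma.mk_le_mk_iff.2 h)))).symm
    have hΦinj : Function.Injective Φ := by
      intro i i' h
      rcases sigma_comparable_sib (h : (F (Sum.inl ⟨i, a₀ i⟩)).1 = _) with h' | h'
      · exact sigma_le_fst_sib (Sum.inl_le_inl_iff.1 (F.le_iff_le.1 h'))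
      · exact (sigma_le_fst_sib (Sum.inl_le_inl_iff.1 (F.le_iff_le.1 h'))).symm
    have Ψ : ∀ i, C i ↪o C (Φ i) := by
      intro i
      refine OrderEmbedding.ofMapLEIff (fun a => (hcomp i a) ▸ (F (Sum.inl ⟨i, a⟩)).2) ?_
      intro a b
      rw [sigma_le_iff_cast_sib (hcomp i a) (hcomp i b), F.le_iff_le,
        Sum.inl_le_inl_iff, Sigma.mk_le_mk_iff]
    set j₀ : I := (F (Sum.inr PUnit.unit)).1 with hj₀def
    have hj₀ : j₀ ∉ Set.range Φ := by
      rintro ⟨i, hi⟩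
      rcases sigma_comparable_sib (hi : (F (Sum.inl ⟨i, a₀ i⟩)).1 = _) with h' | h'
      · exact Sum.not_inl_le_inr (F.le_iff_le.1 h')
      · exact Sum.not_inr_le_inl (F.le_iff_le.1 h')
    -- the orbit of j₀ under Φ
    have horb : Function.Injective fun n => Φ^[n] j₀ := orbit_inj_sib Φ hΦinj j₀ hj₀
    have hS : {n : ℕ | Subsingleton (C (Φ^[n] j₀))}.Finite := by
      have : {n : ℕ | Subsingleton (C (Φ^[n] j₀))} =
          (fun n => Φ^[n] j₀) ⁻¹' {i | Subsingleton (C i)} := rfl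
      rw [this]
      exact Set.Finite.preimage horb.injOn htriv
    obtain ⟨N, hN⟩ := hS.bddAbove
    refine ⟨fun n => Φ^[n + N + 1] j₀, ?_, ?_, ?_⟩
    · intro m n h
      have := horb h
      omega
    · intro n
      rw [← not_subsingleton_iff_nontrivial]
      intro h
      have := hN (Set.mem_setOf.2 h)
      omega
    · intro n
      refine ⟨(Ψ (Φ^[n + N + 1] j₀)).trans (castEmbSib C ?_)⟩
      rw [← Function.iterate_succ_apply' Φ (n + N + 1) j₀]
      congr 1
      omega
  · rintro ⟨g, hg, -, he⟩
    have e : ∀ n, C (g n) ↪o C (g (n + 1)) := fun n => (he n).some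
    classical
    set aux : ∀ i, Σ' j, C i ↪o C j := fun i =>
      if h : ∃ n, g n = i then
        ⟨g (h.choose + 1), (castEmbSib C h.choose_spec.symm).trans (e h.choose)⟩
      else ⟨i, (OrderIso.refl _).toOrderEmbedding⟩ with hauxdef
    have haux1 : ∀ i (h : ∃ n, g n = i), (aux i).1 = g (h.choose + 1) := by
      intro i h
      simp only [hauxdef, dif_pos h]
    have haux2 : ∀ i, ¬(∃ n, g n = i) → (aux i).1 = i := by
      intro i h
      simp only [hauxdef, dif_neg h]
    have hφinj : Function.Injective fun i => (aux i).1 := by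
      intro i i' h
      dsimp at h
      by_cases h1 : ∃ n, g n = i <;> by_cases h2 : ∃ n, g n = i'
      · rw [haux1 i h1, haux1 i' h2] at h
        have : h1.choose = h2.choose := by have := hg h; omega
        rw [← h1.choose_spec, ← h2.choose_spec, this]
      · rw [haux1 i h1, haux2 i' h2] at h
        exact absurd ⟨_, h⟩ h2
      · rw [haux2 i h1, haux1 i' h2] at h
        exact absurd ⟨_, h.symm⟩ h1
      · rw [haux2 i h1, haux2 i' h2] at h
        exact h
    have hrange : g 0 ∉ Set.range fun i => (aux i).1 := by
      rintro ⟨i, hi⟩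
      dsimp at hi
      by_cases h1 : ∃ n, g n = i
      · rw [haux1 i h1] at hi
        have := hg hi
        omega
      · rw [haux2 i h1] at hi
        exact h1 ⟨0, hi.symm⟩
    exact construct_sib (fun i => (aux i).1) hφinj (fun i => (aux i).2) (g 0) hrange
      (Classical.arbitrary _)
end

section
/- Let D = N ⊕ T be a direct sum of chains where N is the direct sum of the non-trivial components and T ≠ ∅ is the direct sum of the trivial (singleton) components. If D has no infinite increasing (under embeddability) sequence of non-trivial components, then D does not embed into N. -/
open Cardinal

section Aux

variable {J : Type*} {D : J → Type*} [∀ j, LinearOrder (D j)]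

lemma sigma_le_comparable {x y : Σ j, D j} (h : x.1 = y.1) : x ≤ y ∨ y ≤ x := by
  obtain ⟨i, a⟩ := x
  obtain ⟨j, b⟩ := y
  cases h
  rcases le_total a b with h' | h'
  · exact Or.inl (Sigma.mk_le_mk_iff.mpr h')
  · exact Or.inr (Sigma.mk_le_mk_iff.mpr h')

lemma sigma_le_fst {x y : Σ j, D j} (h : x ≤ y) : x.1 = y.1 :=
  (Sigma.le_def.mp h).1

lemma sigma_le_iff_cast {x y : Σ j, D j} {k : J} (hx : x.1 = k) (hy : y.1 = k) :
    x ≤ y ↔ cast (congrArg D hx) x.2 ≤ cast (congrArg D hy) y.2 := by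
  obtain ⟨i, a⟩ := x
  obtain ⟨j, b⟩ := y
  cases hx
  cases hy
  simp [Sigma.mk_le_mk_iff]

end Aux

theorem not_embed_into_nontrivial_part (I : Type) (C : I → Type)
    [∀ i, LinearOrder (C i)] [∀ i, Nonempty (C i)]
    (hT : ∃ i, Subsingleton (C i))
    (hno : ¬ ∃ g : ℕ → I, Function.Injective g ∧ (∀ n, Nontrivial (C (g n))) ∧
        ∀ n, Nonempty (C (g n) ↪o C (g (n + 1)))) :
    ¬ Nonempty ((Σ i, C i) ↪o Σ i : {i // Nontrivial (C i)}, C i.1) := by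
  rintro ⟨f⟩
  -- each component maps into a single component
  have hconst : ∀ i (a b : C i), (f ⟨i, a⟩).1 = (f ⟨i, b⟩).1 := by
    intro i a b
    rcases sigma_le_comparable (x := ⟨i, a⟩) (y := ⟨i, b⟩) rfl with h | h
    · exact sigma_le_fst (f.le_iff_le.mpr h)
    · exact (sigma_le_fst (f.le_iff_le.mpr h)).symm
  set φ : I → {i // Nontrivial (C i)} :=
    fun i => (f ⟨i, Classical.arbitrary (C i)⟩).1 with hφdef
  have hφ : ∀ i (a : C i), (f ⟨i, a⟩).1 = φ i := fun i a => hconst i a _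
  -- φ is injective
  have hinj : Function.Injective φ := by
    intro i j hij
    by_contra hne
    have a := Classical.arbitrary (C i)
    have b := Classical.arbitrary (C j)
    have h1 : (f ⟨i, a⟩).1 = (f ⟨j, b⟩).1 := by rw [hφ i a, hφ j b, hij]
    rcases sigma_le_comparable h1 with h | h
    · exact hne (sigma_le_fst (f.le_iff_le.mp h))
    · exact hne (sigma_le_fst (f.le_iff_le.mp h)).symm
  -- embeddings into the image components
  have e : ∀ i, C i ↪o C (φ i).1 := by
    intro i
    refine OrderEmbedding.ofMapLEIff
      (fun a => cast (congrArg (fun j : {i // Nontrivial (C i)} => C j.1) (hφ i a))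
        (f ⟨i, a⟩).2) ?_
    intro a b
    rw [← sigma_le_iff_cast (hφ i a) (hφ i b), f.le_iff_le, Sigma.mk_le_mk_iff]
  set ψ : I → I := fun i => (φ i).1 with hψdef
  have hψinj : Function.Injective ψ := Subtype.val_injective.comp hinj
  obtain ⟨i₀, hi₀⟩ := hT
  have hnt : ∀ i, Nontrivial (C (ψ i)) := fun i => (φ i).2
  have key : ∀ a b, ψ^[a + 1] i₀ = ψ^[b + 1] i₀ → a ≤ b → a = b := by
    intro a b h hab
    by_contra hne
    have h3 : ψ^[a + 1] (ψ^[b - a] i₀) = ψ^[b + 1] i₀ := by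
      rw [← Function.iterate_add_apply]
      congr 1
      omega
    have h2 : i₀ = ψ^[b - a] i₀ := hψinj.iterate (a + 1) (h.trans h3.symm)
    have hntba : Nontrivial (C (ψ^[b - a] i₀)) := by
      have hba : b - a = (b - a - 1) + 1 := by omega
      rw [hba, Function.iterate_succ_apply']
      exact hnt _
    rw [← h2] at hntba
    exact not_nontrivial_iff_subsingleton.mpr hi₀ hntba
  refine hno ⟨fun n => ψ^[n + 1] i₀, ?_, ?_, ?_⟩
  · intro a b h
    rcases le_total a b with hab | hab
    · exact key a b h hab
    · exact (key b a h.symm hab).symm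
  · intro n
    show Nontrivial (C (ψ^[n + 1] i₀))
    rw [Function.iterate_succ_apply']
    exact hnt _
  · intro n
    show Nonempty (C (ψ^[n + 1] i₀) ↪o C (ψ^[n + 1 + 1] i₀))
    have hgg : ψ^[n + 1 + 1] i₀ = ψ (ψ^[n + 1] i₀) := Function.iterate_succ_apply' ψ (n + 1) i₀
    rw [hgg]
    exact ⟨e (ψ^[n + 1] i₀)⟩
end
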